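/- arXiv:1911.10381 — 7 statements merged into one kernel-verified Lean document; each statement's English description precedes it below -/
import Mathlib

section
/- Let m and ℓ be positive integers with 2ℓ ≤ m. Define the cover C(ℓ) of [m] consisting of the intervals [(2i−2)ℓ+1 : 2iℓ] for i = 1,...,⌊m/(2ℓ)⌋, the intervals [(2i−1)ℓ+1 : (2i+1)ℓ] for i = 1,...,⌊(m−ℓ)/(2ℓ)⌋, and the interval [m−2ℓ+1 : m]. Then every index in [m] is contained in at most three intervals of C(ℓ). -/
/-- The cover `C(ℓ)` of `[m] = {1, ..., m}` by intervals of length `2ℓ`: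
the intervals `[(2i−2)ℓ+1 : 2iℓ]` for `i = 1, ..., ⌊m/(2ℓ)⌋` (here reindexed by
`i' = i − 1`), the intervals `[(2i−1)ℓ+1 : (2i+1)ℓ]` for `i = 1, ..., ⌊(m−ℓ)/(2ℓ)⌋`,
and the boundary interval `[m−2ℓ+1 : m]`. -/
def coverSet (m ℓ : ℕ) : Finset (Finset ℕ) :=
  ((Finset.range (m / (2 * ℓ))).image fun i => Finset.Icc (2 * i * ℓ + 1) ((2 * i + 2) * ℓ)) ∪
    ((Finset.range ((m - ℓ) / (2 * ℓ))).image fun i =>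
      Finset.Icc ((2 * i + 1) * ℓ + 1) ((2 * i + 3) * ℓ)) ∪
    {Finset.Icc (m - 2 * ℓ + 1) m}

/-! Each of the two families of `C(ℓ)` consists of consecutive intervals lying strictly one after
the other, so a point meets at most one interval per family, plus possibly the boundary one. -/

open Finset

section IntervalChain

variable {ι α : Type*} [LinearOrder ι] [LinearOrder α] [LocallyFiniteOrder α]
  {a b : ι → α}

theorem card_filter_mem_Icc_le_one (hab : ∀ i j, i < j → b i < a j) (s : Finset ι) (x : α) :
    (s.filter fun i => x ∈ Icc (a i) (b i)).card ≤ 1 := by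
  refine card_le_one.2 fun i hi j hj => ?_
  simp only [mem_filter, mem_Icc] at hi hj
  by_contra hne
  rcases lt_or_gt_of_ne hne with hij | hji
  · exact absurd (hab i j hij) (not_lt.2 (hj.2.1.trans hi.2.2))
  · exact absurd (hab j i hji) (not_lt.2 (hi.2.1.trans hj.2.2))

theorem card_filter_mem_image_Icc_le_one (hab : ∀ i j, i < j → b i < a j) (s : Finset ι)
    (x : α) : ((s.image fun i => Icc (a i) (b i)).filter fun I => x ∈ I).card ≤ 1 := by
  rw [filter_image]
  exact card_image_le.trans (card_filter_mem_Icc_le_one hab s x)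

end IntervalChain

theorem stmt_4_general (m ℓ : ℕ) (x : ℕ) :
    ((coverSet m ℓ).filter fun I => x ∈ I).card ≤ 3 := by
  have evenBlocks := card_filter_mem_image_Icc_le_one
    (a := fun i => 2 * i * ℓ + 1) (b := fun i => (2 * i + 2) * ℓ)
    (fun i j hij => Nat.lt_succ_of_le (Nat.mul_le_mul_right ℓ (by omega)))
    (range (m / (2 * ℓ))) x
  have oddBlocks := card_filter_mem_image_Icc_le_one
    (a := fun i => (2 * i + 1) * ℓ + 1) (b := fun i => (2 * i + 3) * ℓ)
    (fun i j hij => Nat.lt_succ_of_le (Nat.mul_le_mul_right ℓ (by omega)))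
    (range ((m - ℓ) / (2 * ℓ))) x
  have boundary : (({Icc (m - 2 * ℓ + 1) m} : Finset (Finset ℕ)).filter fun I => x ∈ I).card ≤ 1 :=
    (card_filter_le _ _).trans (card_singleton _).le
  rw [coverSet, filter_union, filter_union]
  calc _ ≤ _ + _ + _ := (card_union_le _ _).trans (Nat.add_le_add_right (card_union_le _ _) _)
    _ ≤ 1 + 1 + 1 := add_le_add (add_le_add evenBlocks oddBlocks) boundary

/-- Every index of `[m]` is contained in at most three intervals of the cover `C(ℓ)`. -/
theorem stmt_4 (m ℓ : ℕ) (hℓ : 0 < ℓ) (hm : 2 * ℓ ≤ m)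
    (x : ℕ) (hx : x ∈ Finset.Icc 1 m) :
    ((coverSet m ℓ).filter fun I => x ∈ I).card ≤ 3 :=
  stmt_4_general m ℓ x
end

section
/- Let m and ℓ be positive integers with 2ℓ ≤ m. Define the cover C(ℓ) of [m] as the set of intervals [(2i−2)ℓ+1 : 2iℓ] for i = 1,...,⌊m/(2ℓ)⌋, intervals [(2i−1)ℓ+1 : (2i+1)ℓ] for i = 1,...,⌊(m−ℓ)/(2ℓ)⌋, and the interval [m−2ℓ+1 : m]. Then every pair (a, b) with 1 ≤ a ≤ b ≤ m and b − a + 1 ≤ ℓ is contained in at least one interval of C(ℓ), i.e., there exists I ∈ C(ℓ) with a, b ∈ I. -/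
/-- Every pair `(a, b)` with `1 ≤ a ≤ b ≤ m` and `b − a + 1 ≤ ℓ` is contained in at
least one interval of the cover `C(ℓ)`. -/
theorem stmt_5 (m ℓ : ℕ) (hℓ : 0 < ℓ) (hm : 2 * ℓ ≤ m) (a b : ℕ)
    (h1 : 1 ≤ a) (hab : a ≤ b) (hbm : b ≤ m) (hlen : b - a + 1 ≤ ℓ) :
    ∃ I ∈ coverSet m ℓ, a ∈ I ∧ b ∈ I := by
  set k := (a - 1) / ℓ with hk
  have hk1 : k * ℓ ≤ a - 1 := Nat.div_mul_le_self _ _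
  have hk2 : a - 1 < (k + 1) * ℓ := by
    rw [hk, Nat.succ_mul]
    exact Nat.lt_div_mul_add hℓ
  have hb : b < a + ℓ := by omega
  have e0 : (k + 1) * ℓ = k * ℓ + ℓ := by ring
  by_cases hcase : (k + 2) * ℓ ≤ m
  · have e1 : (k + 2) * ℓ = k * ℓ + 2 * ℓ := by ring
    rcases Nat.even_or_odd k with ⟨i, hi⟩ | ⟨i, hi⟩
    · have g1 : 2 * i * ℓ = k * ℓ := by rw [hi]; ring
      have g2 : (2 * i + 2) * ℓ = k * ℓ + 2 * ℓ := by rw [hi]; ring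
      have g3 : (i + 1) * (2 * ℓ) = k * ℓ + 2 * ℓ := by rw [hi]; ring
      refine ⟨Finset.Icc (2 * i * ℓ + 1) ((2 * i + 2) * ℓ), ?_, ?_, ?_⟩
      · unfold coverSet
        simp only [Finset.mem_union, Finset.mem_image, Finset.mem_range]
        left; left
        refine ⟨i, ?_, rfl⟩
        rw [show i < m / (2 * ℓ) ↔ i + 1 ≤ m / (2 * ℓ) from Iff.rfl,
          Nat.le_div_iff_mul_le (by omega)]
        omega
      · simp only [Finset.mem_Icc]; omega
      · simp only [Finset.mem_Icc]; omega
    · have g1 : (2 * i + 1) * ℓ = k * ℓ := by rw [hi]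
      have g2 : (2 * i + 3) * ℓ = k * ℓ + 2 * ℓ := by rw [hi]; ring
      have g3 : (i + 1) * (2 * ℓ) = k * ℓ + ℓ := by rw [hi]; ring
      refine ⟨Finset.Icc ((2 * i + 1) * ℓ + 1) ((2 * i + 3) * ℓ), ?_, ?_, ?_⟩
      · unfold coverSet
        simp only [Finset.mem_union, Finset.mem_image, Finset.mem_range]
        left; right
        refine ⟨i, ?_, rfl⟩
        rw [show i < (m - ℓ) / (2 * ℓ) ↔ i + 1 ≤ (m - ℓ) / (2 * ℓ) from Iff.rfl,
          Nat.le_div_iff_mul_le (by omega)]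
        omega
      · simp only [Finset.mem_Icc]; omega
      · simp only [Finset.mem_Icc]; omega
  · have e1 : (k + 2) * ℓ = k * ℓ + 2 * ℓ := by ring
    refine ⟨Finset.Icc (m - 2 * ℓ + 1) m, ?_, ?_, ?_⟩
    · exact Finset.mem_union_right _ (Finset.mem_singleton_self _)
    · simp only [Finset.mem_Icc]; omega
    · simp only [Finset.mem_Icc]; omega
end

section
/- Let H be a sequence of moves of length m, let P ⊆ [m] be nonempty, and let C be a nonempty set of arcs of H each of length at most ℓ, where ℓ ≤ m/2 is a positive integer. Then there exists an interval I = [i : i+2ℓ−1] ⊆ [m] of length 2ℓ such that |C restricted to I| / |C| ≥ max{ 2ℓ/(16m), |P ∩ I|/(4|P|) }, where C restricted to I denotes the arcs of C with both endpoints in I. -/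
open scoped Classical

/-- `IsArc H a b (i, j)`: the pair `(i, j)` is an arc of the sequence
`H` restricted to positions `[a : b]`, i.e. `a ≤ i < j ≤ b`, `H i = H j`, and no
index strictly between `i` and `j` carries the same value (two consecutive
occurrences of the same node). -/
def IsArc {V : Type*} (H : ℕ → V) (a b : ℕ) (α : ℕ × ℕ) : Prop :=
  a ≤ α.1 ∧ α.1 < α.2 ∧ α.2 ≤ b ∧ H α.1 = H α.2 ∧
    ∀ l, α.1 < l → l < α.2 → H l ≠ H α.1

set_option maxHeartbeats 1000000 in
/-- Let `H` be a sequence of moves of length `m`, `P ⊆ [m]` nonempty, and `C` a nonempty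
set of arcs of `H` each of length at most `ℓ`, where `0 < ℓ ≤ m/2`. Then there is an
interval `I = [i : i+2ℓ−1] ⊆ [m]` of length `2ℓ` with
`|C↾I| / |C| ≥ max { 2ℓ/(16m), |P ∩ I|/(4|P|) }`, where `C↾I` is the set of arcs of `C`
with both endpoints in `I`. -/
theorem stmt_6 {V : Type*} (m ℓ : ℕ) (hℓ : 0 < ℓ) (hm : 2 * ℓ ≤ m)
    (H : ℕ → V) (P : Finset ℕ) (hP : P ⊆ Finset.Icc 1 m) (hPne : P.Nonempty)
    (C : Finset (ℕ × ℕ)) (hCne : C.Nonempty)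
    (hC : ∀ α ∈ C, IsArc H 1 m α ∧ α.2 - α.1 + 1 ≤ ℓ) :
    ∃ i, 1 ≤ i ∧ i + 2 * ℓ - 1 ≤ m ∧
      ((C.filter fun α =>
            α.1 ∈ Finset.Icc i (i + 2 * ℓ - 1) ∧ α.2 ∈ Finset.Icc i (i + 2 * ℓ - 1)).card : ℝ)
          / (C.card : ℝ) ≥
        max ((2 * ℓ : ℝ) / (16 * m))
          (((P ∩ Finset.Icc i (i + 2 * ℓ - 1)).card : ℝ) / (4 * P.card)) := by
  classical
  have hCpos : 0 < C.card := Finset.card_pos.mpr hCne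
  have hPpos : 0 < P.card := Finset.card_pos.mpr hPne
  set K := (m - 2*ℓ)/ℓ with hKdef
  have hKmod : ℓ * K + (m - 2*ℓ) % ℓ = m - 2*ℓ := Nat.div_add_mod _ _
  have hKr : (m - 2*ℓ) % ℓ < ℓ := Nat.mod_lt _ hℓ
  set N := K + 2 with hNdef
  have hmpos : 0 < m := by omega
  have hNpos0 : 0 < N := Nat.succ_pos _
  have hKl : K * ℓ ≤ m - 2*ℓ := Nat.div_mul_le_self _ _
  clear_value K
  set s : ℕ → ℕ := fun k => if k ≤ K then 1 + k*ℓ else m + 1 - 2*ℓ with hsdef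
  -- interval bounds
  have hbounds : ∀ k, 1 ≤ s k ∧ s k + 2*ℓ - 1 ≤ m := by
    intro k
    by_cases h : k ≤ K
    · simp only [hsdef, h, if_true]
      refine ⟨by omega, ?_⟩
      have h2 : k * ℓ ≤ K * ℓ := Nat.mul_le_mul_right _ h
      omega
    · simp only [hsdef, h, if_false]
      omega
  -- coverage: every arc of C lies in some interval
  have hcover : ∀ α ∈ C, ∃ k ∈ Finset.range N,
      α.1 ∈ Finset.Icc (s k) (s k + 2*ℓ - 1) ∧ α.2 ∈ Finset.Icc (s k) (s k + 2*ℓ - 1) := by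
    intro α hα
    obtain ⟨⟨h1, h2, h3, _, _⟩, hlen⟩ := hC α hα
    have hjm := Nat.div_add_mod (α.1 - 1) ℓ
    have hjr : (α.1 - 1) % ℓ < ℓ := Nat.mod_lt _ hℓ
    set j := (α.1 - 1)/ℓ with hjdef
    clear_value j
    have hc1 : j * ℓ = ℓ * j := Nat.mul_comm _ _
    have hc2 : K * ℓ = ℓ * K := Nat.mul_comm _ _
    by_cases hjK : j ≤ K
    · refine ⟨j, Finset.mem_range.mpr (by omega), ?_, ?_⟩ <;>
      · simp only [hsdef, hjK, if_true, Finset.mem_Icc]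
        omega
    · refine ⟨K+1, Finset.mem_range.mpr (by omega), ?_, ?_⟩ <;>
      · have hKj : (K+1) * ℓ ≤ j * ℓ := Nat.mul_le_mul_right _ (by omega)
        have he : (K+1) * ℓ = K*ℓ + ℓ := by ring
        simp only [hsdef, Finset.mem_Icc, if_neg (show ¬ (K+1 ≤ K) by omega)]
        omega
  -- multiplicity: each point lies in at most 3 intervals
  have hmult : ∀ p : ℕ, 1 ≤ p →
      ((Finset.range N).filter (fun k => p ∈ Finset.Icc (s k) (s k + 2*ℓ - 1))).card ≤ 3 := by
    intro p hp
    have hqm := Nat.div_add_mod (p - 1) ℓ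
    have hqr : (p - 1) % ℓ < ℓ := Nat.mod_lt _ hℓ
    set q := (p - 1)/ℓ with hqdef
    clear_value q
    have hsub : ((Finset.range N).filter (fun k => p ∈ Finset.Icc (s k) (s k + 2*ℓ - 1)))
        ⊆ {q - 1, q, K + 1} := by
      intro k hk
      simp only [Finset.mem_filter, Finset.mem_range, Finset.mem_Icc] at hk
      obtain ⟨hkN, hk1, hk2⟩ := hk
      simp only [Finset.mem_insert, Finset.mem_singleton]
      by_cases hkK : k ≤ K
      · simp only [hsdef, hkK, if_true] at hk1 hk2
        have e0 : q*ℓ = ℓ*q := Nat.mul_comm _ _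
        have e1 : (q+1)*ℓ = q*ℓ + ℓ := by ring
        have e2 : (k+2)*ℓ = k*ℓ + 2*ℓ := by ring
        have hlt1 : k*ℓ < (q+1)*ℓ := by omega
        have hlt2 : q*ℓ < (k+2)*ℓ := by omega
        have hv1 : k < q + 1 := Nat.lt_of_mul_lt_mul_right hlt1
        have hv2 : q < k + 2 := Nat.lt_of_mul_lt_mul_right hlt2
        omega
      · omega
    calc ((Finset.range N).filter (fun k => p ∈ Finset.Icc (s k) (s k + 2*ℓ - 1))).card
        ≤ ({q - 1, q, K + 1} : Finset ℕ).card := Finset.card_le_card hsub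
      _ ≤ 3 := by
          have a1 := Finset.card_insert_le (q-1) ({q, K+1} : Finset ℕ)
          have a2 := Finset.card_insert_le q ({K+1} : Finset ℕ)
          simp only [Finset.card_singleton] at a1 a2
          omega
  -- counting fact 1
  have fact1 : C.card ≤ ∑ k ∈ Finset.range N,
      (C.filter (fun α => α.1 ∈ Finset.Icc (s k) (s k + 2*ℓ - 1) ∧
        α.2 ∈ Finset.Icc (s k) (s k + 2*ℓ - 1))).card := by
    calc C.card = ∑ _α ∈ C, 1 := (Finset.card_eq_sum_ones C)
      _ ≤ ∑ α ∈ C, ((Finset.range N).filter (fun k =>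
            α.1 ∈ Finset.Icc (s k) (s k + 2*ℓ - 1) ∧
            α.2 ∈ Finset.Icc (s k) (s k + 2*ℓ - 1))).card := by
          refine Finset.sum_le_sum fun α hα => ?_
          obtain ⟨k, hk, h⟩ := hcover α hα
          exact Finset.card_pos.mpr ⟨k, Finset.mem_filter.mpr ⟨hk, h⟩⟩
      _ = ∑ α ∈ C, ∑ k ∈ Finset.range N, if (α.1 ∈ Finset.Icc (s k) (s k + 2*ℓ - 1) ∧
            α.2 ∈ Finset.Icc (s k) (s k + 2*ℓ - 1)) then 1 else 0 :=
          Finset.sum_congr rfl fun α _ => Finset.card_filter _ _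
      _ = ∑ k ∈ Finset.range N, ∑ α ∈ C, if (α.1 ∈ Finset.Icc (s k) (s k + 2*ℓ - 1) ∧
            α.2 ∈ Finset.Icc (s k) (s k + 2*ℓ - 1)) then 1 else 0 := Finset.sum_comm
      _ = _ := Finset.sum_congr rfl fun k _ => (Finset.card_filter _ _).symm
  -- counting fact 2
  have fact2 : ∑ k ∈ Finset.range N, (P ∩ Finset.Icc (s k) (s k + 2*ℓ - 1)).card
      ≤ 3 * P.card := by
    calc ∑ k ∈ Finset.range N, (P ∩ Finset.Icc (s k) (s k + 2*ℓ - 1)).card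
        = ∑ k ∈ Finset.range N, ∑ p ∈ P,
            if p ∈ Finset.Icc (s k) (s k + 2*ℓ - 1) then 1 else 0 :=
          Finset.sum_congr rfl fun k _ => by
            rw [← Finset.filter_mem_eq_inter, Finset.card_filter]
      _ = ∑ p ∈ P, ∑ k ∈ Finset.range N,
            if p ∈ Finset.Icc (s k) (s k + 2*ℓ - 1) then 1 else 0 := Finset.sum_comm
      _ = ∑ p ∈ P, ((Finset.range N).filter
            (fun k => p ∈ Finset.Icc (s k) (s k + 2*ℓ - 1))).card :=
          Finset.sum_congr rfl fun p _ => (Finset.card_filter _ _).symm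
      _ ≤ ∑ _p ∈ P, 3 := by
          refine Finset.sum_le_sum fun p hp => hmult p ?_
          have := hP hp
          simp only [Finset.mem_Icc] at this
          omega
      _ = 3 * P.card := by simp [mul_comm]
  -- real averaging
  have hNl : N * ℓ ≤ m := by
    have e : N * ℓ = K * ℓ + 2 * ℓ := by rw [hNdef]; ring
    have hc2 : K * ℓ = ℓ * K := Nat.mul_comm _ _
    omega
  set f : ℕ → ℝ := fun k =>
    ((C.filter (fun α => α.1 ∈ Finset.Icc (s k) (s k + 2*ℓ - 1) ∧
        α.2 ∈ Finset.Icc (s k) (s k + 2*ℓ - 1))).card : ℝ) / (C.card : ℝ)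
      - ((P ∩ Finset.Icc (s k) (s k + 2*ℓ - 1)).card : ℝ) / (4 * (P.card : ℝ)) with hfdef
  have hCposR : (0:ℝ) < (C.card : ℝ) := by exact_mod_cast hCpos
  have hPposR : (0:ℝ) < (P.card : ℝ) := by exact_mod_cast hPpos
  have hA : (1:ℝ) ≤ ∑ k ∈ Finset.range N,
      ((C.filter (fun α => α.1 ∈ Finset.Icc (s k) (s k + 2*ℓ - 1) ∧
        α.2 ∈ Finset.Icc (s k) (s k + 2*ℓ - 1))).card : ℝ) / (C.card : ℝ) := by
    rw [← Finset.sum_div, one_le_div hCposR]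
    exact_mod_cast fact1
  have hB : ∑ k ∈ Finset.range N,
      ((P ∩ Finset.Icc (s k) (s k + 2*ℓ - 1)).card : ℝ) / (4 * (P.card : ℝ)) ≤ 3/4 := by
    rw [← Finset.sum_div, div_le_div_iff₀ (by positivity) (by norm_num)]
    have : (∑ k ∈ Finset.range N,
        ((P ∩ Finset.Icc (s k) (s k + 2*ℓ - 1)).card : ℝ)) ≤ 3 * (P.card : ℝ) := by
      exact_mod_cast fact2
    nlinarith [hPposR]
  have hsumf : ∑ k ∈ Finset.range N, (1 / (4 * (N:ℝ))) ≤ ∑ k ∈ Finset.range N, f k := by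
    have hNpos : (0:ℝ) < (N:ℝ) := by positivity
    have h1 : ∑ k ∈ Finset.range N, (1 / (4 * (N:ℝ))) = 1/4 := by
      rw [Finset.sum_const, Finset.card_range, nsmul_eq_mul]
      field_simp
      try ring
    rw [h1]
    have h2 : ∑ k ∈ Finset.range N, f k
        = (∑ k ∈ Finset.range N,
            ((C.filter (fun α => α.1 ∈ Finset.Icc (s k) (s k + 2*ℓ - 1) ∧
              α.2 ∈ Finset.Icc (s k) (s k + 2*ℓ - 1))).card : ℝ) / (C.card : ℝ))
          - ∑ k ∈ Finset.range N,
            ((P ∩ Finset.Icc (s k) (s k + 2*ℓ - 1)).card : ℝ) / (4 * (P.card : ℝ)) := by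
      rw [← Finset.sum_sub_distrib]
    rw [h2]
    linarith
  obtain ⟨k, hkmem, hfk⟩ := Finset.exists_le_of_sum_le
    (Finset.nonempty_range_iff.mpr (by omega)) hsumf
  refine ⟨s k, (hbounds k).1, (hbounds k).2, ?_⟩
  simp only [hfdef] at hfk
  have hNposR : (0:ℝ) < (N:ℝ) := by exact_mod_cast hNpos0
  have hmposR : (0:ℝ) < (m:ℝ) := by exact_mod_cast hmpos
  have hfrac : (0:ℝ) < 1 / (4 * (N:ℝ)) := by positivity
  have hPk : (0:ℝ) ≤ ((P ∩ Finset.Icc (s k) (s k + 2*ℓ - 1)).card : ℝ) / (4 * (P.card : ℝ)) := by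
    positivity
  have hkey : (2 * (ℓ:ℝ)) / (16 * (m:ℝ)) ≤ 1 / (4 * (N:ℝ)) := by
    rw [div_le_div_iff₀ (by positivity) (by positivity)]
    have : (N:ℝ) * (ℓ:ℝ) ≤ (m:ℝ) := by exact_mod_cast hNl
    nlinarith
  rw [ge_iff_le, max_le_iff]
  constructor
  · linarith
  · linarith
end

section
/- Suppose a finite collection of arcs A is partitioned into t groups D_1, ..., D_t (with D_0 = D_{t+1} = ∅ by convention), and each arc is labeled good or bad with |good(A)| ≥ 0.99|A|. Then there exists an index i* ∈ [t] such that |good(D_{i*})| / |A| ≥ 1/(2t) and |good(D_{i*})| / |D_{i*−1} ∪ D_{i*} ∪ D_{i*+1}| ≥ 1/7. -/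
open scoped Classical

/-- A finite collection `A` of arcs is partitioned into groups `D 1, ..., D t`
(with `D 0 = D (t+1) = ∅` by convention), and each arc is labeled good or bad via the
predicate `g`, with `|good(A)| ≥ 0.99 |A|`. Then there is an index `i* ∈ [t]` such that
`|good(D i*)| / |A| ≥ 1/(2t)` and `|good(D i*)| / |D (i*−1) ∪ D i* ∪ D (i*+1)| ≥ 1/7`. -/
theorem stmt_7 {α : Type*} [DecidableEq α] (t : ℕ) (ht : 1 ≤ t)
    (D : ℕ → Finset α) (hD0 : D 0 = ∅) (hDt : ∀ j, t < j → D j = ∅)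
    (hdisj : ∀ i j, i ≠ j → Disjoint (D i) (D j))
    (A : Finset α) (hA : A = (Finset.Icc 1 t).biUnion D) (hAne : A.Nonempty)
    (g : α → Prop)
    (hgood : (0.99 : ℝ) * (A.card : ℝ) ≤ ((A.filter g).card : ℝ)) :
    ∃ i ∈ Finset.Icc 1 t,
      (((D i).filter g).card : ℝ) / (A.card : ℝ) ≥ 1 / (2 * t) ∧
      (((D i).filter g).card : ℝ) / ((D (i - 1) ∪ D i ∪ D (i + 1)).card : ℝ) ≥ 1 / 7 := by
  classical
  set n := A.card with hn'
  set G : ℕ → ℕ := fun i => ((D i).filter g).card with hG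
  set d : ℕ → ℕ := fun i => (D i).card with hd
  have hnpos : 0 < n := Finset.card_pos.mpr hAne
  have htR : (0:ℝ) < (t:ℝ) := by exact_mod_cast ht
  -- reduce to a natural-number statement
  suffices hNat : ∃ i ∈ Finset.Icc 1 t, n ≤ 2 * t * G i ∧
      (D (i-1) ∪ D i ∪ D (i+1)).card ≤ 7 * G i by
    obtain ⟨i, hi, h1, h2⟩ := hNat
    have hGpos : 0 < G i := by
      rcases Nat.eq_zero_or_pos (G i) with h | h
      · rw [h, Nat.mul_zero] at h1; omega
      · exact h
    refine ⟨i, hi, ?_, ?_⟩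
    · rw [ge_iff_le, div_le_div_iff₀ (by positivity) (by exact_mod_cast hnpos)]
      have : (n:ℝ) ≤ 2 * t * G i := by exact_mod_cast h1
      nlinarith
    · have hDsub : D i ⊆ D (i-1) ∪ D i ∪ D (i+1) := by
        intro x hx; simp [hx]
      have hupos : 0 < (D (i-1) ∪ D i ∪ D (i+1)).card := by
        have h3 : G i ≤ (D (i-1) ∪ D i ∪ D (i+1)).card :=
          le_trans (Finset.card_le_card (Finset.filter_subset _ _))
            (Finset.card_le_card hDsub)
        omega
      rw [ge_iff_le, div_le_div_iff₀ (by norm_num) (by exact_mod_cast hupos)]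
      have : ((D (i-1) ∪ D i ∪ D (i+1)).card : ℝ) ≤ 7 * G i := by exact_mod_cast h2
      nlinarith
  -- main counting argument
  by_contra hN
  push_neg at hN
  have hdisj' : ∀ i ∈ Finset.Icc 1 t, ∀ j ∈ Finset.Icc 1 t, i ≠ j → Disjoint (D i) (D j) :=
    fun i _ j _ h => hdisj i j h
  have hn : n = ∑ i ∈ Finset.Icc 1 t, d i := by
    rw [hn', hA, Finset.card_biUnion hdisj']
  have hgsum : (A.filter g).card = ∑ i ∈ Finset.Icc 1 t, G i := by
    rw [hA, Finset.filter_biUnion, Finset.card_biUnion]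
    intro i hi j hj hij
    exact (hdisj i j hij).mono (Finset.filter_subset _ _) (Finset.filter_subset _ _)
  have h99 : 99 * n ≤ 100 * (A.filter g).card := by
    have hR : (99 * n : ℝ) ≤ 100 * ((A.filter g).card : ℝ) := by nlinarith
    exact_mod_cast hR
  -- the sum of d over the extended range equals n
  have hext : ∑ i ∈ Finset.Icc 0 (t+1), d i = n := by
    rw [hn]
    symm
    apply Finset.sum_subset
    · intro x hx; simp only [Finset.mem_Icc] at hx ⊢; omega
    · intro x hx hx'
      simp only [Finset.mem_Icc] at hx hx'
      have hx0 : x = 0 ∨ x = t + 1 := by omega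
      rcases hx0 with h | h
      · simp [hd, h, hD0]
      · simp [hd, h, hDt (t+1) (by omega)]
  -- shifted sums are at most n
  have hs1 : ∑ i ∈ Finset.Icc 1 t, d (i - 1) ≤ n := by
    rw [← hext]
    have hinj : ∀ x ∈ Finset.Icc 1 t, ∀ y ∈ Finset.Icc 1 t, x - 1 = y - 1 → x = y := by
      intro x hx y hy h
      simp only [Finset.mem_Icc] at hx hy; omega
    have key : ∑ j ∈ (Finset.Icc 1 t).image (fun i => i - 1), d j
        = ∑ i ∈ Finset.Icc 1 t, d (i - 1) := Finset.sum_image hinj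
    rw [← key]
    apply Finset.sum_le_sum_of_subset
    intro j hj
    simp only [Finset.mem_image, Finset.mem_Icc] at hj ⊢
    obtain ⟨i, hi, rfl⟩ := hj
    omega
  have hs2 : ∑ i ∈ Finset.Icc 1 t, d (i + 1) ≤ n := by
    rw [← hext]
    have hinj : ∀ x ∈ Finset.Icc 1 t, ∀ y ∈ Finset.Icc 1 t, x + 1 = y + 1 → x = y := by
      intro x hx y hy h; omega
    have key : ∑ j ∈ (Finset.Icc 1 t).image (fun i => i + 1), d j
        = ∑ i ∈ Finset.Icc 1 t, d (i + 1) := Finset.sum_image hinj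
    rw [← key]
    apply Finset.sum_le_sum_of_subset
    intro j hj
    simp only [Finset.mem_image, Finset.mem_Icc] at hj ⊢
    obtain ⟨i, hi, rfl⟩ := hj
    omega
  have hs0 : ∑ i ∈ Finset.Icc 1 t, d i ≤ n := le_of_eq hn.symm
  have hu : ∀ i, (D (i-1) ∪ D i ∪ D (i+1)).card ≤ d (i-1) + d i + d (i+1) := by
    intro i
    calc (D (i-1) ∪ D i ∪ D (i+1)).card
        ≤ (D (i-1) ∪ D i).card + (D (i+1)).card := Finset.card_union_le _ _
      _ ≤ (D (i-1)).card + (D i).card + (D (i+1)).card :=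
          Nat.add_le_add_right (Finset.card_union_le _ _) _
  set P : ℕ → Prop := fun i => n ≤ 2 * t * G i with hP
  set SH := ∑ i ∈ (Finset.Icc 1 t).filter P, G i with hSHdef
  set SC := ∑ i ∈ (Finset.Icc 1 t).filter (fun i => ¬ P i), G i with hSCdef
  have hsplit : ∑ i ∈ Finset.Icc 1 t, G i = SH + SC :=
    (Finset.sum_filter_add_sum_filter_not _ _ _).symm
  have hSH : 7 * SH ≤ 3 * n := by
    calc 7 * SH = ∑ i ∈ (Finset.Icc 1 t).filter P, 7 * G i := by
          rw [hSHdef, Finset.mul_sum]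
      _ ≤ ∑ i ∈ (Finset.Icc 1 t).filter P, (d (i-1) + d i + d (i+1)) := by
          apply Finset.sum_le_sum
          intro i hi
          simp only [Finset.mem_filter] at hi
          exact le_trans (le_of_lt (hN i hi.1 hi.2)) (hu i)
      _ ≤ ∑ i ∈ Finset.Icc 1 t, (d (i-1) + d i + d (i+1)) :=
          Finset.sum_le_sum_of_subset (Finset.filter_subset _ _)
      _ = (∑ i ∈ Finset.Icc 1 t, d (i-1)) + (∑ i ∈ Finset.Icc 1 t, d i)
            + (∑ i ∈ Finset.Icc 1 t, d (i+1)) := by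
          rw [Finset.sum_add_distrib, Finset.sum_add_distrib]
      _ ≤ n + n + n := add_le_add (add_le_add hs1 hs0) hs2
      _ = 3 * n := by ring
  have hSC : 2 * SC ≤ n - 1 := by
    have hbound : t * (2 * SC) ≤ t * (n - 1) := by
      have h1 : ∑ i ∈ (Finset.Icc 1 t).filter (fun i => ¬ P i), (2 * t * G i)
          ≤ ((Finset.Icc 1 t).filter (fun i => ¬ P i)).card * (n - 1) := by
        have := Finset.sum_le_card_nsmul ((Finset.Icc 1 t).filter (fun i => ¬ P i))
          (fun i => 2 * t * G i) (n - 1) ?_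
        · simpa [smul_eq_mul] using this
        · intro i hi
          simp only [Finset.mem_filter, hP] at hi
          show 2 * t * G i ≤ n - 1
          omega
      have h2 : ∑ i ∈ (Finset.Icc 1 t).filter (fun i => ¬ P i), (2 * t * G i)
          = t * (2 * SC) := by
        rw [hSCdef, Finset.mul_sum, Finset.mul_sum]
        exact Finset.sum_congr rfl (fun i _ => by ring)
      have h3 : ((Finset.Icc 1 t).filter (fun i => ¬ P i)).card ≤ t := by
        have := Finset.card_filter_le (Finset.Icc 1 t) (fun i => ¬ P i)
        simpa [Nat.card_Icc] using this
      calc t * (2 * SC) = ∑ i ∈ (Finset.Icc 1 t).filter (fun i => ¬ P i), (2 * t * G i) :=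
            h2.symm
        _ ≤ ((Finset.Icc 1 t).filter (fun i => ¬ P i)).card * (n - 1) := h1
        _ ≤ t * (n - 1) := Nat.mul_le_mul_right _ h3
    exact Nat.le_of_mul_le_mul_left hbound (by omega)
  rw [hgsum, hsplit] at h99
  omega
end

section
/- Let C be a set of arcs of a nontrivial sequence H such that the nodes of the arcs in C are pairwise distinct. Then the rank of the matrix whose columns are the improvement vectors of the arcs in C is at least |C|/2. -/
open scoped Classical

/-- The configuration reached from the initial configuration `γ` after performing the
moves of `H` at positions `a, a+1, ..., i` (each move flips the sign of the moved node). -/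
noncomputable def conf {V : Type*} (γ : V → ℝ) (H : ℕ → V) (a i : ℕ) (v : V) : ℝ :=
  γ v * (-1 : ℝ) ^ ((Finset.Icc a i).filter fun l => H l = v).card

/-- `v` appears an odd number of times strictly between positions `i` and `j` of `H`. -/
def oddIn {V : Type*} (H : ℕ → V) (i j : ℕ) (v : V) : Prop :=
  Odd ((Finset.Ioo i j).filter fun l => H l = v).card

/-- The improvement vector of the arc `α` of the sequence `H` (with moves starting at
position `a`), with respect to the adjacency relation `Adj` of the graph and the initial
configuration `γ`. It is indexed (symmetrically) by ordered pairs of nodes; its entry at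
an edge `(u, v)` with `u = node(α)` is nonzero iff `u` and `v` are adjacent and `v`
appears an odd number of times strictly inside `α`, in which case it equals
`2 γ_{i−1}(u) γ_{i−1}(v)`, where `γ_{i−1}` is the configuration just before the first
move of `α`. -/
noncomputable def impVec {V : Type*} (Adj : V → V → Prop) (γ : V → ℝ) (H : ℕ → V)
    (a : ℕ) (α : ℕ × ℕ) : V × V → ℝ :=
  fun p =>
    if (p.1 = H α.1 ∧ Adj p.1 p.2 ∧ oddIn H α.1 α.2 p.2) ∨
        (p.2 = H α.1 ∧ Adj p.1 p.2 ∧ oddIn H α.1 α.2 p.1) then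
      2 * conf γ H a (α.1 - 1) p.1 * conf γ H a (α.1 - 1) p.2
    else 0

/-!
Pick for every arc `α ∈ C` a node `w α` of its interior and look at the rows `(node α, w α)`.
Since the nodes of `C` are distinct, the row of `α` meets at most two columns: that of `α`
itself (a nonzero entry `±2`) and that of the unique arc of `C` with node `w α`, if any.
The resulting "successor" map on `C` is a functional graph; greedily picking an arc and
discarding its successor keeps half of `C` on which the successor relation is acyclic, and
there the submatrix is triangular with nonzero diagonal.
-/

open Finset

theorem exists_half_subset_rank_descending {ι : Type*} [DecidableEq ι] (f : ι → ι)
    (C : Finset ι) :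
    ∃ S ⊆ C, C.card ≤ 2 * S.card ∧
      ∃ ρ : ι → ℕ, ∀ β ∈ S, f β ∈ S → f β ≠ β → ρ (f β) < ρ β := by
  induction C using Finset.strongInduction with
  | _ C ih =>
    rcases C.eq_empty_or_nonempty with rfl | ⟨α, hα⟩
    · exact ⟨∅, subset_rfl, by simp, fun _ => 0, by simp⟩
    set C' := (C.erase α).erase (f α)
    have hC'C : C' ⊆ C := (erase_subset _ _).trans (erase_subset _ _)
    obtain ⟨S', hS'C', hcard, ρ', hρ'⟩ := ih C'
      ((ssubset_iff_of_subset hC'C).mpr ⟨α, hα, by simp [C']⟩)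
    have hαS' : α ∉ S' := fun h => by simpa [C'] using hS'C' h
    have hfαS' : f α ∉ S' := fun h => by simpa [C'] using hS'C' h
    -- `α` gets the lowest rank and its successor was discarded, so ranks still descend along `f`.
    refine ⟨insert α S', insert_subset hα (hS'C'.trans hC'C), ?_,
      fun x => if x = α then 0 else ρ' x + 1, ?_⟩
    · have hcard_erase : C.card - 1 ≤ (C.erase α).card := pred_card_le_card_erase
      have hcard_C' : (C.erase α).card - 1 ≤ C'.card := pred_card_le_card_erase
      have hcard_insert := card_insert_of_notMem hαS'
      have hC_pos : 0 < C.card := card_pos.mpr ⟨α, hα⟩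
      omega
    · rintro β hβ hfβ hne
      rcases mem_insert.mp hβ with rfl | hβS'
      · rcases mem_insert.mp hfβ with h | h
        exacts [absurd h hne, absurd h hfαS']
      have hβα : β ≠ α := by rintro rfl; exact hαS' hβS'
      rcases mem_insert.mp hfβ with h | hfβS'
      · simp [h, hβα]
      · have hfβα : f β ≠ α := by rintro h; exact hαS' (h ▸ hfβS')
        simpa [hfβα, hβα] using hρ' β hβS' hfβS' hne

theorem linearIndepOn_of_rank_descending {ι κ K : Type*} [Field K] (v : ι → κ → K)
    (S : Finset ι) (r : ι → κ) (f : ι → ι) (ρ : ι → ℕ)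
    (hdiag : ∀ α ∈ S, v α (r α) ≠ 0)
    (hoff : ∀ α ∈ S, ∀ β ∈ S, β ≠ α → β ≠ f α → v β (r α) = 0)
    (hρ : ∀ β ∈ S, f β ∈ S → f β ≠ β → ρ (f β) < ρ β) :
    LinearIndepOn K v (S : Set ι) := by
  rw [linearIndepOn_finset_iff]
  intro c hc
  by_contra! hsupp
  obtain ⟨β, hβ, hmin⟩ := (S.filter fun α => c α ≠ 0).exists_min_image ρ (by
    obtain ⟨α, hα, hcα⟩ := hsupp
    exact ⟨α, mem_filter.mpr ⟨hα, hcα⟩⟩)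
  rw [mem_filter] at hβ
  have hsucc : f β ∈ S → f β ≠ β → c (f β) = 0 := fun hfβ hne => by
    by_contra hc'
    exact (hρ β hβ.1 hfβ hne).not_ge (hmin _ (mem_filter.mpr ⟨hfβ, hc'⟩))
  have hrow : ∑ α ∈ S, c α * v α (r β) = 0 := by
    simpa using congrFun hc (r β)
  rw [sum_eq_single β (fun α hα hne => ?_) (absurd hβ.1)] at hrow
  · exact (mul_ne_zero hβ.2 (hdiag β hβ.1)) hrow
  · by_cases hαf : α = f β
    · subst hαf
      rw [hsucc hα hne, zero_mul]
    · rw [hoff β hβ.1 α hα hne hαf, mul_zero]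

theorem LinearIndepOn.card_le_finrank_span_image {ι K M : Type*} [Field K] [AddCommGroup M]
    [Module K M] {v : ι → M} {S C : Finset ι} (hS : LinearIndepOn K v (S : Set ι))
    (hSC : S ⊆ C) :
    S.card ≤ Module.finrank K (Submodule.span K (v '' C)) := by
  have : Module.Finite K (Submodule.span K (v '' C)) :=
    FiniteDimensional.span_of_finite K (C.finite_toSet.image v)
  calc S.card = Module.finrank K (Submodule.span K (v '' S)) := by
        rw [Set.image_eq_range, finrank_span_eq_card hS]
        simp
    _ ≤ _ := Submodule.finrank_mono (Submodule.span_mono (Set.image_mono hSC))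

section ImprovementVector

variable {V : Type*} {Adj : V → V → Prop} {γ : V → ℝ} {H : ℕ → V} {a : ℕ}

theorem conf_ne_zero (hγ : ∀ v, γ v = 1 ∨ γ v = -1) (i : ℕ) (v : V) : conf γ H a i v ≠ 0 := by
  rcases hγ v with h | h <;> simp [conf, h]

theorem impVec_apply_ne_zero (hγ : ∀ v, γ v = 1 ∨ γ v = -1) {α : ℕ × ℕ} {w : V}
    (hadj : Adj (H α.1) w) (hodd : oddIn H α.1 α.2 w) :
    impVec Adj γ H a α (H α.1, w) ≠ 0 := by
  rw [impVec, if_pos (Or.inl ⟨rfl, hadj, hodd⟩)]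
  exact mul_ne_zero (mul_ne_zero two_ne_zero (conf_ne_zero hγ _ _)) (conf_ne_zero hγ _ _)

theorem impVec_apply_eq_zero {α : ℕ × ℕ} {u w : V} (hu : H α.1 ≠ u) (hw : H α.1 ≠ w) :
    impVec Adj γ H a α (u, w) = 0 := by
  rw [impVec, if_neg]
  rintro (⟨h, -⟩ | ⟨h, -⟩)
  exacts [hu h.symm, hw h.symm]

end ImprovementVector

/-- Let `C` be a set of arcs of a nontrivial sequence `H` (every arc of `H` has nonempty
interior: some node adjacent to the arc's node appears an odd number of times strictly
inside the arc) whose nodes are pairwise distinct. Then the rank of the matrix whose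
columns are the improvement vectors of the arcs in `C` is at least `|C|/2`. -/
theorem stmt_8 {V : Type*} (Adj : V → V → Prop) (hsym : Symmetric Adj)
    (m : ℕ) (H : ℕ → V) (γ : V → ℝ) (hγ : ∀ v, γ v = 1 ∨ γ v = -1)
    (hnontriv : ∀ α : ℕ × ℕ, IsArc H 1 m α →
      ∃ k, α.1 < k ∧ k < α.2 ∧ Adj (H k) (H α.1) ∧ oddIn H α.1 α.2 (H k))
    (C : Finset (ℕ × ℕ)) (hC : ∀ α ∈ C, IsArc H 1 m α)
    (hdistinct : ∀ α ∈ C, ∀ β ∈ C, α ≠ β → H α.1 ≠ H β.1) :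
    (C.card : ℝ) / 2 ≤
      (Module.finrank ℝ (Submodule.span ℝ (impVec Adj γ H 1 '' ↑C)) : ℝ) := by
  choose! k _ _ hk_adj hk_odd using fun α hα => hnontriv α (hC α hα)
  have hinj : Set.InjOn (fun β : ℕ × ℕ => H β.1) C :=
    fun α hα β hβ h => by_contra fun hne => hdistinct α hα β hβ hne h
  obtain ⟨S, hSC, hcard, ρ, hρ⟩ := exists_half_subset_rank_descending
    (fun α => Function.invFunOn (fun β : ℕ × ℕ => H β.1) C (H (k α))) C
  have hS : LinearIndepOn ℝ (impVec Adj γ H 1) (S : Set (ℕ × ℕ)) := by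
    refine linearIndepOn_of_rank_descending _ S (fun α => (H α.1, H (k α))) _ ρ
      (fun α hα => ?_) (fun α hα β hβ hβα hβf => ?_) hρ
    · exact impVec_apply_ne_zero hγ (hsym (hk_adj α (hSC hα))) (hk_odd α (hSC hα))
    · refine impVec_apply_eq_zero (hdistinct β (hSC hβ) α (hSC hα) hβα) fun h => hβf ?_
      simp only [← h]
      exact (hinj.leftInvOn_invFunOn (hSC hβ)).symm
  calc (C.card : ℝ) / 2 ≤ S.card := by
        rw [div_le_iff₀ two_pos, mul_comm]
        exact_mod_cast hcard
    _ ≤ _ := by exact_mod_cast hS.card_le_finrank_span_image hSC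
end

section
/- In the construction where H consists of 5n/d blocks (d = 0.1·log₃ n), with block B_i = (v_{1, i mod N_1}, ..., v_{d, i mod N_d}) where N_k = n^{0.1}·3^{k−1}, and G contains all edges between V_1 and ∪_{k≥2} V_k: every substring S of H satisfies rank(S)/len(S) = O(1/log n). -/
/-!
In `H9 d` the node `v_{k,j}` recurs exactly every `N_k·d` positions, so an arc starting in layer `k`
has length `N_k·d`. Arcs of layer 1 start at distinct positions `≡ 1 (mod d)` of `S`, so there are
at most `len(S)/d` of them. An arc of a node `u` of layer `k ≥ 2` contains every node of `V_1`
exactly `3^(k-1)` times, an odd number, so its improvement vector is supported on all edges at `u`;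
between two arcs of `u` the sign of `u` flips `t` times and that of each `v ∈ V_1` flips
`3^(k-1)·t` times, so the vector is the same for all arcs of `u`. Layer `k` thus contributes at most
`N_k` vectors, and only when `N_k·d ≤ len(S)`; as the `N_k` grow geometrically this totals at most
`3·len(S)/d`. Hence `d·rank(S) ≤ 4·len(S)`, while `log n = 10·d·log 3`.
-/

open scoped Classical

/-! The hard construction (Appendix B). Here `d = 0.1·log₃ n`, i.e. `n = 3^(10d)`.
Nodes are pairs `v_{k,j} = (k, j)` with `1 ≤ k ≤ d` and `j < N_k = n^0.1 · 3^(k−1)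
= 3^(d+k−1)`. The graph contains all edges between `V_1` and `∪_{k≥2} V_k`. The
sequence `H` is the concatenation of `5n/d` blocks, where the `i`-th block is
`(v_{1, i mod N_1}, ..., v_{d, i mod N_d})`. -/

/-- `N_k = n^0.1 · 3^(k−1) = 3^(d+k−1)`, the size of `V_k`. -/
def Nsize (d k : ℕ) : ℕ := 3 ^ (d + k - 1)

/-- The node `(k, j)` is a legitimate node of the construction: `1 ≤ k ≤ d`, `j < N_k`. -/
def validNode (d : ℕ) (p : ℕ × ℕ) : Prop :=
  1 ≤ p.1 ∧ p.1 ≤ d ∧ p.2 < Nsize d p.1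

/-- Adjacency of the constructed graph: all edges between `V_1` and `∪_{k=2}^d V_k`. -/
def Adj9 (d : ℕ) (p q : ℕ × ℕ) : Prop :=
  validNode d p ∧ validNode d q ∧ ((p.1 = 1 ∧ 2 ≤ q.1) ∨ (q.1 = 1 ∧ 2 ≤ p.1))

/-- The constructed sequence `H` (1-indexed): position `idx` lies in block
`i = ⌈idx/d⌉` at offset `k = idx − (i−1)d`, and carries the node `v_{k, i mod N_k}`. -/
def H9 (d : ℕ) (idx : ℕ) : ℕ × ℕ :=
  ((idx - 1) % d + 1, ((idx - 1) / d + 1) % Nsize d ((idx - 1) % d + 1))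

/-- The number of blocks, `5n/d` with `n = 3^(10d)`. -/
def numBlocks (d : ℕ) : ℕ := 5 * 3 ^ (10 * d) / d

/-- `rank(S)` for the substring `S = H[a : b]`: the rank of the matrix whose columns are
the improvement vectors (w.r.t. the constructed graph) of all arcs of `S`. -/
noncomputable def subRank (d a b : ℕ) : ℕ :=
  Module.finrank ℝ (Submodule.span ℝ
    (impVec (Adj9 d) (fun _ => 1) (H9 d) a '' {α : ℕ × ℕ | IsArc (H9 d) a b α}))

open Finset

lemma card_filter_modEq_Ico {d : ℕ} (hd : 0 < d) (r a n : ℕ) :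
    #{i ∈ Ico a (a + n * d) | i ≡ r [MOD d]} = n := by
  induction n with
  | zero => simp
  | succ n ih =>
    have hperiod : Function.Periodic (· ≡ r [MOD d]) d := fun i => by
      simp only [Nat.ModEq, Nat.add_mod_right]
    rw [add_mul, one_mul, ← add_assoc,
      ← Ico_union_Ico_eq_Ico (Nat.le_add_right a (n * d)) (Nat.le_add_right _ d), filter_union,
      card_union_of_disjoint (disjoint_filter_filter (Ico_disjoint_Ico_consecutive _ _ _)), ih,
      Nat.filter_Ico_card_eq_of_periodic _ _ _ hperiod, Nat.count_modEq_card _ hd]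
    simp [Nat.div_self hd]

lemma mul_sum_pow_le_of_forall_mul_pow_le {m c L : ℕ} {E : Finset ℕ} (hm : 2 ≤ m)
    (h : ∀ e ∈ E, c * m ^ e ≤ L) : c * ∑ e ∈ E, m ^ e ≤ m * L := by
  rcases E.eq_empty_or_nonempty with rfl | hE
  · simp
  have hsum : ∑ e ∈ E, m ^ e < m ^ (E.max' hE + 1) :=
    Nat.geomSum_lt hm fun e he => Nat.lt_succ_of_le (E.le_max' e he)
  calc c * ∑ e ∈ E, m ^ e ≤ c * m ^ (E.max' hE + 1) := Nat.mul_le_mul_left c hsum.le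
    _ = m * (c * m ^ E.max' hE) := by ring
    _ ≤ m * L := Nat.mul_le_mul_left m (h _ (E.max'_mem hE))

lemma Nat.modEq_mul_iff_mod_eq_and_div_modEq {x y d N : ℕ} :
    x ≡ y [MOD d * N] ↔ x % d = y % d ∧ x / d ≡ y / d [MOD N] := by
  rcases Nat.eq_zero_or_pos d with rfl | hd
  · simp [Nat.ModEq]
  unfold Nat.ModEq
  rw [Nat.mod_mul, Nat.mod_mul]
  constructor
  · intro h
    have hmod : x % d = y % d := by
      simpa [Nat.add_mul_mod_self_left, Nat.mod_mod] using congrArg (· % d) h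
    refine ⟨hmod, Nat.eq_of_mul_eq_mul_left hd ?_⟩
    omega
  · rintro ⟨h₁, h₂⟩
    rw [h₁, h₂]

section Arcs

variable {V : Type*}

noncomputable def arcs (H : ℕ → V) (a b : ℕ) : Finset (ℕ × ℕ) :=
  {α ∈ Icc a b ×ˢ Icc a b | IsArc H a b α}

lemma mem_arcs {H : ℕ → V} {a b : ℕ} {α : ℕ × ℕ} : α ∈ arcs H a b ↔ IsArc H a b α := by
  simp only [arcs, mem_filter, mem_product, mem_Icc, and_iff_right_iff_imp]
  rintro ⟨hai, hij, hjb, -⟩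
  omega

lemma coe_arcs (H : ℕ → V) (a b : ℕ) : (arcs H a b : Set (ℕ × ℕ)) = {α | IsArc H a b α} :=
  Set.ext fun _ => mem_arcs

lemma conf_sub_one_eq_mul (γ : V → ℝ) (H : ℕ → V) {a i i' : ℕ} (hi : 1 ≤ i) (hai : a ≤ i)
    (hii' : i ≤ i') (v : V) :
    conf γ H a (i' - 1) v = conf γ H a (i - 1) v * (-1) ^ #{l ∈ Ico i i' | H l = v} := by
  have hIcc : ∀ m, 1 ≤ m → Icc a (m - 1) = Ico a m := fun m hm => by
    ext; simp only [mem_Icc, mem_Ico]; omega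
  rw [conf, conf, hIcc i' (by omega), hIcc i hi, ← Ico_union_Ico_eq_Ico hai hii', filter_union,
    card_union_of_disjoint (disjoint_filter_filter (Ico_disjoint_Ico_consecutive a i i')), pow_add,
    mul_assoc]

end Arcs

lemma Nsize_pos (d k : ℕ) : 0 < Nsize d k := Nat.pow_pos (by norm_num)

lemma Nsize_eq_pow_mul {d k : ℕ} (hk : 1 ≤ k) : Nsize d k = 3 ^ (k - 1) * Nsize d 1 := by
  rw [Nsize, Nsize, ← pow_add]
  congr 1
  omega

lemma H9_add_one (d m : ℕ) :
    H9 d (m + 1) = (m % d + 1, (m / d + 1) % Nsize d (m % d + 1)) := rfl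

lemma validNode_H9 {d : ℕ} (hd : 0 < d) (l : ℕ) : validNode d (H9 d l) :=
  ⟨Nat.le_add_left _ _, Nat.mod_lt _ hd, Nat.mod_lt _ (Nsize_pos _ _)⟩

lemma H9_eq_H9_iff {d l l' : ℕ} (hl : 1 ≤ l) (hl' : 1 ≤ l') :
    H9 d l = H9 d l' ↔ l ≡ l' [MOD Nsize d (H9 d l).1 * d] := by
  obtain ⟨x, rfl⟩ := Nat.exists_eq_add_of_le' hl
  obtain ⟨y, rfl⟩ := Nat.exists_eq_add_of_le' hl'
  have hshift : ∀ m, x + 1 ≡ y + 1 [MOD m] ↔ x ≡ y [MOD m] := fun m =>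
    ⟨Nat.ModEq.add_right_cancel' 1, Nat.ModEq.add_right 1⟩
  simp only [H9_add_one, Prod.mk.injEq]
  rw [mul_comm, hshift, Nat.modEq_mul_iff_mod_eq_and_div_modEq, add_left_inj]
  constructor
  · rintro ⟨hmod, hdiv⟩
    rw [← hmod] at hdiv
    exact ⟨hmod, Nat.ModEq.add_right_cancel' 1 hdiv⟩
  · rintro ⟨hmod, hdiv⟩
    refine ⟨hmod, ?_⟩
    rw [← hmod]
    exact Nat.ModEq.add_right 1 hdiv

lemma exists_H9_eq {d : ℕ} {v : ℕ × ℕ} (hv : validNode d v) : ∃ l, 1 ≤ l ∧ H9 d l = v := by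
  obtain ⟨hk, hkd, hj⟩ := hv
  -- offset `k` in block `j + N_k - 1`, whose successor is `≡ j (mod N_k)`
  refine ⟨(v.1 - 1 + (v.2 + Nsize d v.1 - 1) * d) + 1, Nat.le_add_left _ _, ?_⟩
  have hmod : (v.1 - 1 + (v.2 + Nsize d v.1 - 1) * d) % d + 1 = v.1 := by
    rw [Nat.add_mul_mod_self_right, Nat.mod_eq_of_lt (by omega)]
    omega
  have hdiv : (v.1 - 1 + (v.2 + Nsize d v.1 - 1) * d) / d + 1 = v.2 + Nsize d v.1 := by
    rw [Nat.add_mul_div_right _ _ (by omega), Nat.div_eq_of_lt (by omega)]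
    have := Nsize_pos d v.1
    omega
  rw [H9_add_one, hmod, hdiv, Nat.add_mod_right, Nat.mod_eq_of_lt hj]

lemma card_filter_H9_eq_Ico {d s : ℕ} (hd : 0 < d) {v : ℕ × ℕ} (hv : validNode d v)
    (hs : 1 ≤ s) (n : ℕ) [DecidablePred (H9 d · = v)] :
    #{l ∈ Ico s (s + n * (Nsize d v.1 * d)) | H9 d l = v} = n := by
  obtain ⟨l₀, hl₀, rfl⟩ := exists_H9_eq hv
  have hocc : ∀ l ∈ Ico s (s + n * (Nsize d (H9 d l₀).1 * d)),
      H9 d l = H9 d l₀ ↔ l ≡ l₀ [MOD Nsize d (H9 d l₀).1 * d] := fun l hl => by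
    rw [eq_comm, H9_eq_H9_iff hl₀ (by simp only [mem_Ico] at hl; omega)]
    exact Nat.ModEq.comm
  rw [filter_congr hocc, card_filter_modEq_Ico (Nat.mul_pos (Nsize_pos _ _) hd)]

lemma IsArc.snd_eq_H9 {d a b : ℕ} {α : ℕ × ℕ} (hd : 0 < d) (ha : 1 ≤ a)
    (h : IsArc (H9 d) a b α) : α.2 = α.1 + Nsize d (H9 d α.1).1 * d := by
  obtain ⟨hai, hij, -, heq, hmin⟩ := h
  have hle := ((H9_eq_H9_iff (by omega) (by omega)).mp heq).add_le_of_lt hij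
  by_contra hne
  refine hmin (α.1 + Nsize d (H9 d α.1).1 * d)
    (Nat.lt_add_of_pos_right (Nat.mul_pos (Nsize_pos _ _) hd)) (by omega) ?_
  rw [eq_comm, H9_eq_H9_iff (by omega) (by omega)]
  exact Nat.add_modEq_right.symm

lemma Adj9_comm {d : ℕ} {p q : ℕ × ℕ} : Adj9 d p q ↔ Adj9 d q p := by
  unfold Adj9
  tauto

lemma Adj9.validNode_and_fst_eq_one {d : ℕ} {p q : ℕ × ℕ} (h : Adj9 d p q) (hp : 2 ≤ p.1) :
    validNode d q ∧ q.1 = 1 := by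
  obtain ⟨-, hq, h | h⟩ := h
  · omega
  · exact ⟨hq, h.1⟩

section LayerTwo

variable {d a i : ℕ}

lemma oddIn_H9 (hd : 0 < d) (hi : 1 ≤ i) (hk : 2 ≤ (H9 d i).1) {v : ℕ × ℕ}
    (hv : validNode d v) (hv1 : v.1 = 1) :
    oddIn (H9 d) i (i + Nsize d (H9 d i).1 * d) v := by
  have hM : Nsize d (H9 d i).1 * d = 3 ^ ((H9 d i).1 - 1) * (Nsize d v.1 * d) := by
    rw [Nsize_eq_pow_mul (by omega), hv1, mul_assoc]
  have hne : H9 d i ≠ v := fun h => by rw [h] at hk; omega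
  have hcount := card_filter_H9_eq_Ico hd hv hi (3 ^ ((H9 d i).1 - 1))
  have hlt : i < i + 3 ^ ((H9 d i).1 - 1) * (Nsize d v.1 * d) :=
    Nat.lt_add_of_pos_right (Nat.mul_pos (by positivity) (Nat.mul_pos (Nsize_pos _ _) hd))
  rw [← Ioo_insert_left hlt, filter_insert, if_neg hne] at hcount
  rw [oddIn, filter_congr_decidable, hM, hcount]
  exact Odd.pow (by decide)

lemma conf_mul_conf_H9_add_mul (γ : ℕ × ℕ → ℝ) (hd : 0 < d) (ha : 1 ≤ a) (hai : a ≤ i)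
    (hk : 2 ≤ (H9 d i).1) {v : ℕ × ℕ} (hv : validNode d v) (hv1 : v.1 = 1) (t : ℕ) :
    conf γ (H9 d) a (i + t * (Nsize d (H9 d i).1 * d) - 1) (H9 d i) *
        conf γ (H9 d) a (i + t * (Nsize d (H9 d i).1 * d) - 1) v =
      conf γ (H9 d) a (i - 1) (H9 d i) * conf γ (H9 d) a (i - 1) v := by
  have hi : 1 ≤ i := ha.trans hai
  have hu : conf γ (H9 d) a (i + t * (Nsize d (H9 d i).1 * d) - 1) (H9 d i) =
      conf γ (H9 d) a (i - 1) (H9 d i) * (-1) ^ t := by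
    rw [conf_sub_one_eq_mul γ _ hi hai (Nat.le_add_right _ _), filter_congr_decidable,
      card_filter_H9_eq_Ico hd (validNode_H9 hd i) hi]
  have hv' : conf γ (H9 d) a (i + t * (Nsize d (H9 d i).1 * d) - 1) v =
      conf γ (H9 d) a (i - 1) v * (-1) ^ (t * 3 ^ ((H9 d i).1 - 1)) := by
    have hM : t * (Nsize d (H9 d i).1 * d) = t * 3 ^ ((H9 d i).1 - 1) * (Nsize d v.1 * d) := by
      rw [Nsize_eq_pow_mul (by omega), hv1]
      ring
    rw [hM, conf_sub_one_eq_mul γ _ hi hai (Nat.le_add_right _ _), filter_congr_decidable,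
      card_filter_H9_eq_Ico hd hv hi]
  have heven : Even (t * (1 + 3 ^ ((H9 d i).1 - 1))) :=
    (Nat.odd_iff.mpr rfl |>.add_odd (Odd.pow (by decide))).mul_left t
  rw [hu, hv']
  calc conf γ (H9 d) a (i - 1) (H9 d i) * (-1) ^ t *
        (conf γ (H9 d) a (i - 1) v * (-1) ^ (t * 3 ^ ((H9 d i).1 - 1)))
      = conf γ (H9 d) a (i - 1) (H9 d i) * conf γ (H9 d) a (i - 1) v *
          (-1) ^ (t * (1 + 3 ^ ((H9 d i).1 - 1))) := by ring
    _ = conf γ (H9 d) a (i - 1) (H9 d i) * conf γ (H9 d) a (i - 1) v := by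
      rw [heven.neg_one_pow, mul_one]

variable {b : ℕ}

lemma impVec_H9_of_two_le (γ : ℕ × ℕ → ℝ) (hd : 0 < d) (ha : 1 ≤ a) {α : ℕ × ℕ}
    (hα : IsArc (H9 d) a b α) (hk : 2 ≤ (H9 d α.1).1) :
    impVec (Adj9 d) γ (H9 d) a α = fun p =>
      if (p.1 = H9 d α.1 ∨ p.2 = H9 d α.1) ∧ Adj9 d p.1 p.2 then
        2 * conf γ (H9 d) a (α.1 - 1) p.1 * conf γ (H9 d) a (α.1 - 1) p.2
      else 0 := by
  have hi : 1 ≤ α.1 := ha.trans hα.1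
  funext p
  unfold impVec
  congr 1
  rw [hα.snd_eq_H9 hd ha, eq_iff_iff]
  constructor
  · rintro (⟨h, hadj, -⟩ | ⟨h, hadj, -⟩)
    exacts [⟨Or.inl h, hadj⟩, ⟨Or.inr h, hadj⟩]
  · rintro ⟨h | h, hadj⟩
    · obtain ⟨hv, hv1⟩ := hadj.validNode_and_fst_eq_one (h ▸ hk)
      exact Or.inl ⟨h, hadj, oddIn_H9 hd hi hk hv hv1⟩
    · obtain ⟨hv, hv1⟩ := (Adj9_comm.mp hadj).validNode_and_fst_eq_one (h ▸ hk)
      exact Or.inr ⟨h, hadj, oddIn_H9 hd hi hk hv hv1⟩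

lemma impVec_H9_eq_of_H9_eq (γ : ℕ × ℕ → ℝ) (hd : 0 < d) (ha : 1 ≤ a) {α β : ℕ × ℕ}
    (hα : IsArc (H9 d) a b α) (hβ : IsArc (H9 d) a b β) (hk : 2 ≤ (H9 d α.1).1)
    (hnode : H9 d α.1 = H9 d β.1) :
    impVec (Adj9 d) γ (H9 d) a α = impVec (Adj9 d) γ (H9 d) a β := by
  wlog hle : α.1 ≤ β.1 generalizing α β
  · exact (this hβ hα (hnode ▸ hk) hnode.symm (le_of_not_ge hle)).symm
  obtain ⟨t, ht⟩ := (Nat.modEq_iff_exists_eq_add hle).mp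
    ((H9_eq_H9_iff (ha.trans hα.1) (ha.trans hβ.1)).mp hnode)
  rw [impVec_H9_of_two_le γ hd ha hα hk, impVec_H9_of_two_le γ hd ha hβ (hnode ▸ hk), ← hnode, ht,
    mul_comm _ t]
  funext p
  split_ifs with h
  · obtain ⟨hp | hp, hadj⟩ := h
    · obtain ⟨hv, hv1⟩ := hadj.validNode_and_fst_eq_one (hp ▸ hk)
      rw [hp]
      linear_combination (-2) * conf_mul_conf_H9_add_mul γ hd ha hα.1 hk hv hv1 t
    · obtain ⟨hv, hv1⟩ := (Adj9_comm.mp hadj).validNode_and_fst_eq_one (hp ▸ hk)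
      rw [hp]
      linear_combination (-2) * conf_mul_conf_H9_add_mul γ hd ha hα.1 hk hv hv1 t
  · rfl

end LayerTwo

section Counting

variable {d a b : ℕ}

lemma subRank_le_card_image :
    subRank d a b ≤ #((arcs (H9 d) a b).image (impVec (Adj9 d) (fun _ => 1) (H9 d) a)) := by
  rw [subRank, ← coe_arcs, ← coe_image]
  exact finrank_span_finset_le_card _

lemma mul_card_filter_arcs_H9_fst_eq_one_le (hd : 0 < d) (ha : 1 ≤ a) :
    d * #{α ∈ arcs (H9 d) a b | (H9 d α.1).1 = 1} ≤ b - a := by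
  set s₁ : Finset (ℕ × ℕ) := {α ∈ arcs (H9 d) a b | (H9 d α.1).1 = 1} with hs₁
  have hinj : Set.InjOn Prod.fst (s₁ : Set (ℕ × ℕ)) := by
    intro α hα β hβ h
    simp only [hs₁, mem_coe, mem_filter, mem_arcs] at hα hβ
    exact Prod.ext h (by rw [hα.1.snd_eq_H9 hd ha, hβ.1.snd_eq_H9 hd ha, h])
  have hstarts : s₁.image Prod.fst ⊆ {i ∈ Ico a (a + (b - a) / d * d) | i ≡ 1 [MOD d]} := by
    intro i hi
    obtain ⟨α, hα, rfl⟩ := mem_image.mp hi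
    obtain ⟨harc, hk⟩ := mem_filter.mp hα
    rw [mem_arcs] at harc
    have hsnd := harc.snd_eq_H9 hd ha
    have hmod : α.1 - 1 ≡ 0 [MOD d] := by
      change (α.1 - 1) % d + 1 = 1 at hk
      exact Nat.add_right_cancel hk
    have hd_le := Nat.le_mul_of_pos_left d (Nsize_pos d 1)
    have hdiv := Nat.lt_div_mul_add (a := b - a) hd
    have hjb := harc.2.2.1
    rw [hk] at hsnd
    rw [mem_filter, mem_Ico]
    refine ⟨⟨harc.1, by omega⟩, ?_⟩
    simpa [Nat.sub_add_cancel (ha.trans harc.1)] using hmod.add_right 1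
  calc d * #s₁ = d * #(s₁.image Prod.fst) := by rw [card_image_of_injOn hinj]
    _ ≤ d * ((b - a) / d) := Nat.mul_le_mul_left d
        ((card_le_card hstarts).trans (card_filter_modEq_Ico hd 1 a _).le)
    _ ≤ b - a := Nat.mul_div_le (b - a) d

lemma mul_card_image_impVec_filter_arcs_le (hd : 0 < d) (ha : 1 ≤ a) :
    d * #({α ∈ arcs (H9 d) a b | 2 ≤ (H9 d α.1).1}.image
      (impVec (Adj9 d) (fun _ => 1) (H9 d) a)) ≤ 3 * (b - a) := by
  set F : Finset ℕ := {k ∈ Icc 2 d | Nsize d k * d ≤ b - a} with hF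
  have hnodes : #({α ∈ arcs (H9 d) a b | 2 ≤ (H9 d α.1).1}.image
      (impVec (Adj9 d) (fun _ => 1) (H9 d) a)) ≤
        #(F.biUnion fun k => {k} ×ˢ range (Nsize d k)) := by
    refine card_le_card_of_forall_subsingleton (fun w u => ∃ α ∈ arcs (H9 d) a b,
      2 ≤ (H9 d α.1).1 ∧ H9 d α.1 = u ∧ impVec (Adj9 d) (fun _ => 1) (H9 d) a α = w) ?_ ?_
    · intro w hw
      obtain ⟨α, hα, rfl⟩ := mem_image.mp hw
      obtain ⟨harc, hk⟩ := mem_filter.mp hα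
      refine ⟨H9 d α.1, ?_, α, harc, hk, rfl, rfl⟩
      rw [mem_arcs] at harc
      obtain ⟨-, hkd, hj⟩ := validNode_H9 hd α.1
      have hsnd := harc.snd_eq_H9 hd ha
      have hai := harc.1
      have hjb := harc.2.2.1
      simp only [hF, mem_biUnion, mem_filter, mem_Icc, mem_product, mem_singleton, mem_range]
      exact ⟨(H9 d α.1).1, ⟨⟨hk, hkd⟩, by omega⟩, rfl, hj⟩
    · rintro u - w₁ ⟨-, α, hα, hk, rfl, rfl⟩ w₂ ⟨-, β, hβ, -, hβα, rfl⟩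
      exact impVec_H9_eq_of_H9_eq _ hd ha (mem_arcs.mp hα) (mem_arcs.mp hβ) hk hβα.symm
  have hcard : #(F.biUnion fun k => {k} ×ˢ range (Nsize d k)) ≤ ∑ k ∈ F, Nsize d k :=
    card_biUnion_le.trans_eq (sum_congr rfl fun k _ => by simp)
  have hgeom : d * ∑ k ∈ F, Nsize d k ≤ 3 * (b - a) := by
    have hinj : Set.InjOn (fun k => d + k - 1) (F : Set ℕ) := fun k _ k' _ h => by
      simp only at h
      omega
    change d * ∑ k ∈ F, 3 ^ (d + k - 1) ≤ _
    rw [← sum_image (f := fun e => 3 ^ e) hinj]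
    refine mul_sum_pow_le_of_forall_mul_pow_le (by norm_num) ?_
    simp only [hF, mem_image, mem_filter]
    rintro _ ⟨k, ⟨-, hk⟩, rfl⟩
    rw [mul_comm]
    exact hk
  exact (Nat.mul_le_mul_left d (hnodes.trans hcard)).trans hgeom

lemma mul_subRank_le (hd : 0 < d) (ha : 1 ≤ a) : d * subRank d a b ≤ 4 * (b - a) := by
  set f := impVec (Adj9 d) (fun _ => 1) (H9 d) a
  set s₁ : Finset (ℕ × ℕ) := {α ∈ arcs (H9 d) a b | (H9 d α.1).1 = 1}
  set s₂ : Finset (ℕ × ℕ) := {α ∈ arcs (H9 d) a b | 2 ≤ (H9 d α.1).1}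
  have hsplit : (arcs (H9 d) a b).image f ⊆ s₁.image f ∪ s₂.image f := by
    rw [← image_union, ← filter_or]
    refine image_subset_image fun α hα => mem_filter.mpr ⟨hα, ?_⟩
    have : 1 ≤ (H9 d α.1).1 := Nat.le_add_left _ _
    omega
  have hrank : subRank d a b ≤ #s₁ + #(s₂.image f) :=
    subRank_le_card_image.trans <| (card_le_card hsplit).trans <|
      (card_union_le _ _).trans (Nat.add_le_add_right card_image_le _)
  calc d * subRank d a b ≤ d * #s₁ + d * #(s₂.image f) := by
        rw [← mul_add]
        exact Nat.mul_le_mul_left d hrank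
    _ ≤ (b - a) + 3 * (b - a) := Nat.add_le_add (mul_card_filter_arcs_H9_fst_eq_one_le hd ha)
        (mul_card_image_impVec_filter_arcs_le hd ha)
    _ = 4 * (b - a) := by ring

end Counting

/-- **Appendix B.** In the construction above (with `n = 3^(10d)`), every substring `S`
of `H` satisfies `rank(S)/len(S) = O(1/log n)`, i.e. there is an absolute constant
`c > 0` such that `rank(S) · log n ≤ c · len(S)` for all `d` and all substrings. -/
theorem stmt_9 :
    ∃ c : ℝ, 0 < c ∧ ∀ d : ℕ, 1 ≤ d → ∀ a b : ℕ,
      1 ≤ a → a ≤ b → b ≤ numBlocks d * d →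
      (subRank d a b : ℝ) * Real.log ((3 : ℝ) ^ (10 * d)) ≤ c * ((b - a + 1 : ℕ) : ℝ) := by
  refine ⟨80, by norm_num, fun d hd a b ha _ _ => ?_⟩
  have hrank : (d : ℝ) * subRank d a b ≤ 4 * ((b - a : ℕ) : ℝ) := by
    exact_mod_cast mul_subRank_le hd ha
  have hlog3 : Real.log 3 ≤ 2 := by
    linarith [Real.log_le_sub_one_of_pos (by norm_num : (0 : ℝ) < 3)]
  have hnonneg : (0 : ℝ) ≤ d * subRank d a b := by positivity
  rw [Real.log_pow]
  push_cast
  calc (subRank d a b : ℝ) * (10 * d * Real.log 3)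
      = 10 * (d * subRank d a b) * Real.log 3 := by ring
    _ ≤ 10 * (d * subRank d a b) * 2 := by gcongr
    _ ≤ 80 * ((b - a : ℕ) + 1) := by linarith
end

section
/- Let γ and γ' be two configurations of V that differ only on a set T of nodes (i.e., γ'(v) = −γ(v) for v ∈ T and γ'(v) = γ(v) otherwise). Then for any arc α of a sequence H, the improvement vectors imp_{γ,H}(α) and imp_{γ',H}(α) agree up to sign changes on rows incident to T; consequently, for any set C of arcs, rank of the matrix of improvement vectors with respect to γ equals the rank with respect to γ', i.e., rank_{γ,H}(C) = rank_{γ',H}(C). -/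
open scoped Classical

/-- Let `γ` and `γ'` be configurations differing exactly on a set `T` of nodes. Then for
every arc `α` of `H` the improvement vectors w.r.t. `γ` and `γ'` agree up to sign changes
on rows (edge coordinates) incident to `T`; consequently, for every set `C` of arcs, the
rank of the matrix of improvement vectors w.r.t. `γ'` equals the rank w.r.t. `γ`. -/
theorem stmt_17 {V : Type*} (Adj : V → V → Prop) (H : ℕ → V) (T : Set V)
    (γ γ' : V → ℝ) (hγ' : ∀ v, γ' v = if v ∈ T then -γ v else γ v)
    (C : Finset (ℕ × ℕ)) :
    (∀ α : ℕ × ℕ, ∀ p : V × V,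
      impVec Adj γ' H 1 α p =
        (if p.1 ∈ T then (-1 : ℝ) else 1) * (if p.2 ∈ T then (-1 : ℝ) else 1) *
          impVec Adj γ H 1 α p) ∧
    Module.finrank ℝ (Submodule.span ℝ (impVec Adj γ' H 1 '' ↑C)) =
      Module.finrank ℝ (Submodule.span ℝ (impVec Adj γ H 1 '' ↑C)) := by
  set s : V × V → ℝ := fun p => (if p.1 ∈ T then (-1 : ℝ) else 1) * (if p.2 ∈ T then (-1 : ℝ) else 1) with hs
  have hsv : ∀ v : V, γ' v = (if v ∈ T then (-1 : ℝ) else 1) * γ v := by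
    intro v; rw [hγ']; split <;> ring
  have hconf : ∀ a i v, conf γ' H a i v = (if v ∈ T then (-1 : ℝ) else 1) * conf γ H a i v := by
    intro a i v; simp only [conf, hsv]; ring
  have h1 : ∀ α : ℕ × ℕ, ∀ p : V × V, impVec Adj γ' H 1 α p = s p * impVec Adj γ H 1 α p := by
    intro α p
    simp only [impVec, hconf, hs]
    split <;> ring
  have hss : ∀ p, s p * s p = 1 := by
    intro p; simp only [hs]; split <;> split <;> norm_num
  refine ⟨h1, ?_⟩
  let f : ((V × V) → ℝ) →ₗ[ℝ] ((V × V) → ℝ) :=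
    { toFun := fun x p => s p * x p
      map_add' := by intro x y; funext p; simp [mul_add]
      map_smul' := by intro c x; funext p; simp; ring }
  have hff : ∀ x, f (f x) = x := by
    intro x; funext p; show s p * (s p * x p) = x p; rw [← mul_assoc, hss, one_mul]
  let e : ((V × V) → ℝ) ≃ₗ[ℝ] ((V × V) → ℝ) :=
    LinearEquiv.ofLinear f f (LinearMap.ext fun x => hff x) (LinearMap.ext fun x => hff x)
  have hcomp : impVec Adj γ' H 1 = ⇑e ∘ impVec Adj γ H 1 :=
    funext fun α => funext fun p => h1 α p
  rw [hcomp, Set.image_comp]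
  have : (⇑e '' (impVec Adj γ H 1 '' ↑C)) = ⇑(e.toLinearMap) '' (impVec Adj γ H 1 '' ↑C) := rfl
  rw [this, ← Submodule.map_span, LinearEquiv.finrank_map_eq]
end
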